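/- arXiv:math/0508234 — 3 statements merged into one kernel-verified Lean document; each statement's English description precedes it below -/
import Mathlib

section
/- Let Δ be a reduced root system in a Euclidean space with a W-invariant multiplicity function m taking even nonnegative integer values, and let ρ = (1/2) Σ_{α∈Δ⁺} m_α α. Then for every positive root α ∈ Δ⁺, one has ⟨ρ,α⟩/⟨α,α⟩ ≥ m_α/2. -/
/-!
The reflection `s_α` negates `⟨·, α⟩` and preserves `m`. Split `Δ⁺` according to whether
`s_α β` is again positive. On the part where it is, `s_α` is an involution pairing the terms
`m_β ⟨β, α⟩` with their negatives, so that part contributes `0`. On the remaining part every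
term is nonnegative, because `s_α β = β - c α` becoming negative under a positive linear
functional forces `c > 0`; and `α` itself lies there, since `s_α α = -α`. Hence
`2 ⟨ρ, α⟩ ≥ m_α ⟨α, α⟩`.
-/

open scoped RealInnerProductSpace

section RootReflection

variable {E : Type*} [NormedAddCommGroup E] [InnerProductSpace ℝ E]

noncomputable def rootReflection (α β : E) : E := β - (2 * (⟪α, β⟫ / ⟪α, α⟫)) • α

theorem inner_rootReflection_right (α β : E) :
    ⟪α, rootReflection α β⟫ = -⟪α, β⟫ := by
  rcases eq_or_ne α 0 with rfl | hα
  · simp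
  have hαα : ⟪α, α⟫ ≠ 0 := (real_inner_self_pos.mpr hα).ne'
  simp only [rootReflection, inner_sub_right, real_inner_smul_right]
  field_simp
  ring

theorem inner_rootReflection_left (α β : E) :
    ⟪rootReflection α β, α⟫ = -⟪β, α⟫ := by
  rw [real_inner_comm, inner_rootReflection_right, real_inner_comm]

theorem rootReflection_rootReflection (α β : E) :
    rootReflection α (rootReflection α β) = β := by
  rw [rootReflection, inner_rootReflection_right, rootReflection]
  module

theorem rootReflection_self {α : E} (hα : α ≠ 0) : rootReflection α α = -α := by
  rw [rootReflection, div_self ((real_inner_self_pos.mpr hα).ne')]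
  module

theorem inner_pos_of_map_rootReflection_neg (f : E →ₗ[ℝ] ℝ) {α β : E} (hα : 0 < f α)
    (hβ : 0 < f β) (hsβ : f (rootReflection α β) < 0) : 0 < ⟪β, α⟫ := by
  have hcoeff : 0 < ⟪α, β⟫ / ⟪α, α⟫ := by
    simp only [rootReflection, map_sub, map_smul, smul_eq_mul] at hsβ
    nlinarith
  rw [real_inner_comm]
  exact ((div_pos_iff.mp hcoeff).resolve_right fun h ↦ real_inner_self_nonneg.not_gt h.2).1

theorem sum_filter_rootReflection_mem_eq_zero [DecidableEq E] (α : E) (P : Finset E)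
    (w : E → ℝ) (hw : ∀ β ∈ P, w (rootReflection α β) = w β) :
    ∑ β ∈ P with rootReflection α β ∈ P, w β * ⟪β, α⟫ = 0 := by
  have hcancel : ∀ β ∈ P, w β * ⟪β, α⟫ + w (rootReflection α β) * ⟪rootReflection α β, α⟫ = 0 :=
    fun β hβ ↦ by rw [hw β hβ, inner_rootReflection_left]; ring
  refine Finset.sum_involution (fun β _ ↦ rootReflection α β) ?_ ?_ ?_ ?_
  · intro β hβ
    exact hcancel β (Finset.mem_filter.mp hβ).1
  · intro β hβ hne hfix
    have := hcancel β (Finset.mem_filter.mp hβ).1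
    rw [hfix] at this
    exact hne (by linarith)
  · intro β hβ
    obtain ⟨hβP, hsβP⟩ := Finset.mem_filter.mp hβ
    exact Finset.mem_filter.mpr ⟨hsβP, (rootReflection_rootReflection α β).symm ▸ hβP⟩
  · intro β _
    exact rootReflection_rootReflection α β

theorem mul_inner_self_le_sum_mul_inner [DecidableEq E] (f : E →ₗ[ℝ] ℝ) (P : Finset E)
    (hP : ∀ β ∈ P, 0 < f β) (w : E → ℝ) (hw_nonneg : ∀ β ∈ P, 0 ≤ w β)
    {α : E} (hα : α ∈ P) (hnegα : -α ∉ P)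
    (hsP : ∀ β ∈ P, rootReflection α β ∈ P ∨ -rootReflection α β ∈ P)
    (hw : ∀ β ∈ P, w (rootReflection α β) = w β) :
    w α * ⟪α, α⟫ ≤ ∑ β ∈ P, w β * ⟪β, α⟫ := by
  have hα0 : α ≠ 0 := fun h ↦ (hP α hα).ne' (by simp [h])
  have hterm_nonneg : ∀ β ∈ P.filter (rootReflection α · ∉ P), 0 ≤ w β * ⟪β, α⟫ := by
    intro β hβ
    obtain ⟨hβP, hsβ⟩ := Finset.mem_filter.mp hβ
    have hneg : f (rootReflection α β) < 0 := by
      have := hP _ ((hsP β hβP).resolve_left hsβ)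
      rw [map_neg] at this
      linarith
    exact mul_nonneg (hw_nonneg β hβP)
      (inner_pos_of_map_rootReflection_neg f (hP α hα) (hP β hβP) hneg).le
  have hα_mem : α ∈ P.filter (rootReflection α · ∉ P) :=
    Finset.mem_filter.mpr ⟨hα, by rwa [rootReflection_self hα0]⟩
  rw [← Finset.sum_filter_add_sum_filter_not P (rootReflection α · ∈ P),
    sum_filter_rootReflection_mem_eq_zero α P w hw, zero_add]
  exact Finset.single_le_sum hterm_nonneg hα_mem

end RootReflection

theorem rho_alpha_ge_half_mult_general
    {E : Type*} [NormedAddCommGroup E] [InnerProductSpace ℝ E]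
    (Δ Δpos : Finset E) (m : E → ℕ)
    (hrefl : ∀ α ∈ Δ, ∀ β ∈ Δ,
      β - (2 * ((inner ℝ α β : ℝ) / (inner ℝ α α : ℝ))) • α ∈ Δ)
    (hpos : Δpos ⊆ Δ)
    (hsplit : ∀ α ∈ Δ, α ∈ Δpos ∨ -α ∈ Δpos)
    (hdisj : ∀ α ∈ Δpos, -α ∉ Δpos)
    (hposfun : ∃ f : E →ₗ[ℝ] ℝ, ∀ α ∈ Δpos, 0 < f α)
    (hWinv : ∀ α ∈ Δ, ∀ β ∈ Δ,
      m (β - (2 * ((inner ℝ α β : ℝ) / (inner ℝ α α : ℝ))) • α) = m β)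
    (ρ : E) (hρ : ρ = (1/2 : ℝ) • ∑ α ∈ Δpos, (m α : ℝ) • α) :
    ∀ α ∈ Δpos, (m α : ℝ) / 2 ≤ (inner ℝ ρ α : ℝ) / (inner ℝ α α : ℝ) := by
  classical
  intro α hα
  obtain ⟨f, hf⟩ := hposfun
  have hαΔ := hpos hα
  have key := mul_inner_self_le_sum_mul_inner f Δpos hf (fun β ↦ (m β : ℝ))
    (fun β _ ↦ Nat.cast_nonneg _) hα (hdisj α hα)
    (fun β hβ ↦ hsplit _ (hrefl α hαΔ β (hpos hβ)))
    (fun β hβ ↦ congrArg Nat.cast (hWinv α hαΔ β (hpos hβ)))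
  have hρα : ⟪ρ, α⟫ = 1 / 2 * ∑ β ∈ Δpos, (m β : ℝ) * ⟪β, α⟫ := by
    simp only [hρ, real_inner_smul_left, sum_inner]
  have hαα : 0 < ⟪α, α⟫ :=
    real_inner_self_pos.mpr fun h ↦ (hf α hα).ne' (by simp [h])
  rw [div_le_div_iff₀ two_pos hαα, hρα]
  linarith

/-- For a reduced root system `Δ` with positive system `Δpos`,
Weyl-invariant even multiplicity function `m`, and `ρ = (1/2) Σ_{α∈Δ⁺} m_α α`,
one has `⟨ρ,α⟩/⟨α,α⟩ ≥ m_α/2` for every positive root `α`. -/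
theorem rho_alpha_ge_half_mult
    {E : Type*} [NormedAddCommGroup E] [InnerProductSpace ℝ E]
    (Δ Δpos : Finset E) (m : E → ℕ)
    (hzero : (0:E) ∉ Δ)
    (hrefl : ∀ α ∈ Δ, ∀ β ∈ Δ,
      β - (2 * ((inner ℝ α β : ℝ) / (inner ℝ α α : ℝ))) • α ∈ Δ)
    (hint : ∀ α ∈ Δ, ∀ β ∈ Δ, ∃ z : ℤ,
      2 * ((inner ℝ α β : ℝ) / (inner ℝ α α : ℝ)) = z)
    (hreduced : ∀ α ∈ Δ, (2:ℝ) • α ∉ Δ)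
    (hpos : Δpos ⊆ Δ)
    (hsplit : ∀ α ∈ Δ, α ∈ Δpos ∨ -α ∈ Δpos)
    (hdisj : ∀ α ∈ Δpos, -α ∉ Δpos)
    (hposfun : ∃ f : E →ₗ[ℝ] ℝ, ∀ α ∈ Δpos, 0 < f α)
    (heven : ∀ α, Even (m α))
    (hWinv : ∀ α ∈ Δ, ∀ β ∈ Δ,
      m (β - (2 * ((inner ℝ α β : ℝ) / (inner ℝ α α : ℝ))) • α) = m β)
    (ρ : E) (hρ : ρ = (1/2 : ℝ) • ∑ α ∈ Δpos, (m α : ℝ) • α) :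
    ∀ α ∈ Δpos, (m α : ℝ) / 2 ≤ (inner ℝ ρ α : ℝ) / (inner ℝ α α : ℝ) :=
  rho_alpha_ge_half_mult_general Δ Δpos m hrefl hpos hsplit hdisj hposfun hWinv ρ hρ
end

section
/- Let Δ be a reduced root system with even multiplicities, and define 1/c(m,λ) = C · Π_{α∈Δ⁺} Π_{k=0}^{m_α/2−1} (λ_α + k), where λ_α = ⟨λ,α⟩/⟨α,α⟩ and C = Π_{α∈Δ⁺} Π_{k=0}^{m_α/2−1} 1/(ρ_α + k). Then the function d(m,λ) := c(m,−ρ) / ( c(m,λ+ρ) c(m,−(λ+ρ)) ) is the polynomial function d(m,λ) = Π_{α∈Δ⁺} Π_{k=0}^{m_α/2−1} (k² − (λ+ρ)_α²)/(k² − ρ_α²). -/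
/-!
With `P(t) = Π_{α∈Δ⁺} Π_{k<m_α/2} (t_α + k)` one has `1/c(m,t) = C·P(t)` and `C = 1/P(ρ)`, so
`d(m,λ) = C·P(λ+ρ)·P(−(λ+ρ)) / P(−ρ) = P(λ+ρ)·P(−(λ+ρ)) / (P(ρ)·P(−ρ))`, and the product
formula follows factor by factor from `(t + k)(−t + k) = k² − t²`.
-/

open Finset

/-- Holds also for `c = 0`, where both sides vanish. -/
theorem mul_inv_div_mul_inv_mul_mul_inv {G₀ : Type*} [CommGroupWithZero G₀] (c a b d : G₀) :
    (c * a)⁻¹ / ((c * b)⁻¹ * (c * d)⁻¹) = c * (b * d) / a := by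
  simp only [div_eq_mul_inv, mul_inv, inv_inv]
  calc c⁻¹ * a⁻¹ * (c * b * (c * d)) = c⁻¹ * c * c * (b * d) * a⁻¹ := by ac_rfl
    _ = c * (b * d) * a⁻¹ := by rw [inv_mul_mul_self]

section RisingProd

variable {ι : Type*} (s : Finset ι) (n : ι → ℕ)

def risingProd {A : Type*} [CommRing A] (t : ι → A) : A :=
  ∏ i ∈ s, ∏ k ∈ range (n i), (t i + k)

theorem risingProd_mul_risingProd_neg {A : Type*} [CommRing A] (t : ι → A) :
    risingProd s n t * risingProd s n (-t) =
      ∏ i ∈ s, ∏ k ∈ range (n i), ((k : A) ^ 2 - t i ^ 2) := by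
  simp only [risingProd, ← prod_mul_distrib]
  refine prod_congr rfl fun i _ => prod_congr rfl fun k _ => ?_
  simp only [Pi.neg_apply]
  ring

theorem risingProd_density_eq_prod {K : Type*} [Field K] (R T : ι → K) :
    ((risingProd s n R)⁻¹ * risingProd s n (-R))⁻¹ /
        (((risingProd s n R)⁻¹ * risingProd s n T)⁻¹ *
          ((risingProd s n R)⁻¹ * risingProd s n (-T))⁻¹) =
      ∏ i ∈ s, ∏ k ∈ range (n i), ((k : K) ^ 2 - T i ^ 2) / ((k : K) ^ 2 - R i ^ 2) := by
  rw [mul_inv_div_mul_inv_mul_mul_inv, inv_mul_eq_div, div_div,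
    risingProd_mul_risingProd_neg, risingProd_mul_risingProd_neg]
  simp only [← prod_div_distrib]

end RisingProd

theorem plancherel_density_formula_general
    {E : Type*} [NormedAddCommGroup E] [InnerProductSpace ℝ E]
    (Δpos : Finset E) (m : E → ℕ)
    (ρ : E)
    (C : ℝ)
    (hC : C = ∏ α ∈ Δpos, ∏ k ∈ Finset.range (m α / 2),
      ((inner ℝ ρ α : ℝ) / (inner ℝ α α : ℝ) + k)⁻¹)
    (L : E →ₗ[ℝ] ℂ) :
    (let ρα : E → ℂ := fun α => (((inner ℝ ρ α : ℝ) / (inner ℝ α α : ℝ) : ℝ) : ℂ)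
     let lα : E → ℂ := fun α => L α / ((inner ℝ α α : ℝ) : ℂ)
     let c : (E → ℂ) → ℂ := fun t =>
       ((C : ℂ) * ∏ α ∈ Δpos, ∏ k ∈ Finset.range (m α / 2), (t α + k))⁻¹
     c (fun α => -ρα α) /
        (c (fun α => lα α + ρα α) * c (fun α => -(lα α + ρα α)))
       = ∏ α ∈ Δpos, ∏ k ∈ Finset.range (m α / 2),
           ((k : ℂ)^2 - (lα α + ρα α)^2) / ((k : ℂ)^2 - (ρα α)^2)) := by
  intro ρα lα c
  have hC' : (C : ℂ) = (risingProd Δpos (fun α => m α / 2) ρα)⁻¹ := by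
    simp only [hC, risingProd, ρα, ← prod_inv_distrib]
    push_cast
    rfl
  simp only [c, hC']
  exact risingProd_density_eq_prod Δpos (fun α => m α / 2) ρα (lα + ρα)

/-- For a reduced root system with even multiplicities, with
`1/c(m,λ) = C Π_{α∈Δ⁺} Π_{k=0}^{m_α/2−1} (λ_α + k)` and
`C = Π_{α∈Δ⁺} Π_{k=0}^{m_α/2−1} (ρ_α + k)⁻¹`, the function
`d(m,λ) = c(m,−ρ)/(c(m,λ+ρ) c(m,−(λ+ρ)))` is the polynomial
`Π_{α∈Δ⁺} Π_{k=0}^{m_α/2−1} (k² − (λ+ρ)_α²)/(k² − ρ_α²)`.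
The complexified dual space is parametrized by ℝ-linear maps `L : E →ₗ[ℝ] ℂ`,
with `λ_α = L α / ⟨α,α⟩`. -/
theorem plancherel_density_formula
    {E : Type*} [NormedAddCommGroup E] [InnerProductSpace ℝ E]
    (Δ Δpos : Finset E) (m : E → ℕ)
    (hzero : (0:E) ∉ Δ)
    (hrefl : ∀ α ∈ Δ, ∀ β ∈ Δ,
      β - (2 * ((inner ℝ α β : ℝ) / (inner ℝ α α : ℝ))) • α ∈ Δ)
    (hreduced : ∀ α ∈ Δ, (2:ℝ) • α ∉ Δ)
    (hpos : Δpos ⊆ Δ)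
    (hsplit : ∀ α ∈ Δ, α ∈ Δpos ∨ -α ∈ Δpos)
    (hdisj : ∀ α ∈ Δpos, -α ∉ Δpos)
    (heven : ∀ α, Even (m α))
    (ρ : E) (hρ : ρ = (1/2 : ℝ) • ∑ α ∈ Δpos, (m α : ℝ) • α)
    (hρineq : ∀ α ∈ Δpos, (m α : ℝ) / 2 ≤ (inner ℝ ρ α : ℝ) / (inner ℝ α α : ℝ))
    (C : ℝ)
    (hC : C = ∏ α ∈ Δpos, ∏ k ∈ Finset.range (m α / 2),
      ((inner ℝ ρ α : ℝ) / (inner ℝ α α : ℝ) + k)⁻¹)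
    (L : E →ₗ[ℝ] ℂ) :
    (let ρα : E → ℂ := fun α => (((inner ℝ ρ α : ℝ) / (inner ℝ α α : ℝ) : ℝ) : ℂ)
     let lα : E → ℂ := fun α => L α / ((inner ℝ α α : ℝ) : ℂ)
     let c : (E → ℂ) → ℂ := fun t =>
       ((C : ℂ) * ∏ α ∈ Δpos, ∏ k ∈ Finset.range (m α / 2), (t α + k))⁻¹
     c (fun α => -ρα α) /
        (c (fun α => lα α + ρα α) * c (fun α => -(lα α + ρα α)))
       = ∏ α ∈ Δpos, ∏ k ∈ Finset.range (m α / 2),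
           ((k : ℂ)^2 - (lα α + ρα α)^2) / ((k : ℂ)^2 - (ρα α)^2)) :=
  plancherel_density_formula_general Δpos m ρ C hC L
end

section
/- The polynomial d(m,λ) = Π_{α∈Δ⁺} Π_{k=0}^{m_α/2−1} (k²−(λ+ρ)_α²)/(k²−ρ_α²) is invariant under the Weyl group action λ ↦ w(λ+ρ) − ρ for every w ∈ W, i.e., d(m, w(λ+ρ)−ρ) = d(m,λ). -/
/-!
The Weyl group element `w` permutes the positive roots up to sign. The factor of `d` at a
root `α` depends only on `m α` and on the square of `⟪λ + ρ, α⟫ / ⟪α, α⟫`, both unchanged by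
`α ↦ -α` and by the isometry `w`. Hence the numerator of `d`, as a function of `μ = λ + ρ`, is
`w`-invariant, while the denominator does not involve `λ` at all.
-/

open Finset

section SignedPermutation

variable {E M : Type*} [AddGroup E] [CommMonoid M]

/-- Reindexing along a map that sends `P` into `P ∪ -P`: the sign is fixed by sending `x` to
whichever of `x, -x` lies in `P`, and this is a bijection of `P` because `P ∩ -P = ∅`. -/
theorem Finset.prod_comp_eq_prod_of_map_neg (P : Finset E) (hdisj : ∀ α ∈ P, -α ∉ P)
    (f : E → E) (hf : Function.Injective f) (hf_neg : ∀ x, f (-x) = -f x)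
    (hmaps : ∀ α ∈ P, f α ∈ P ∨ -f α ∈ P) (g : E → M) (hg : ∀ x, g (-x) = g x) :
    ∏ α ∈ P, g (f α) = ∏ α ∈ P, g α := by
  classical
  set s : E → E := fun x => if x ∈ P then x else -x
  have hs_mem : ∀ α ∈ P, s (f α) ∈ P := fun α hα => by
    by_cases h : f α ∈ P
    · simp [s, h]
    · simpa [s, h] using (hmaps α hα).resolve_left h
  have hs_eq : ∀ x, s x = x ∨ s x = -x := fun x => by
    by_cases h : x ∈ P <;> simp [s, h]
  have hs_inj : Set.InjOn (s ∘ f) P := by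
    intro α hα β hβ hαβ
    have hfαβ : f α = f β ∨ f α = f (-β) := by
      rw [hf_neg]
      rcases hs_eq (f α) with h₁ | h₁ <;> rcases hs_eq (f β) with h₂ | h₂ <;>
        rw [Function.comp_apply, Function.comp_apply, h₁, h₂] at hαβ
      · exact Or.inl hαβ
      · exact Or.inr hαβ
      · exact Or.inr (neg_eq_iff_eq_neg.mp hαβ)
      · exact Or.inl (neg_inj.mp hαβ)
    rcases hfαβ with h | h
    · exact hf h
    · exact absurd (hf h ▸ hα : -β ∈ P) (hdisj β hβ)
  refine prod_nbij (s ∘ f) hs_mem hs_inj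
    (surjOn_of_injOn_of_card_le _ hs_mem hs_inj le_rfl) fun α _ => ?_
  rcases hs_eq (f α) with h | h <;> simp [Function.comp_apply, h, hg]

end SignedPermutation

section RootProduct

variable {E : Type*} [NormedAddCommGroup E] [InnerProductSpace ℝ E]

/-- The paper's `μ_α`. -/
noncomputable def rootCoord (μ α : E) : ℝ := inner ℝ μ α / inner ℝ α α

theorem rootCoord_neg_right (μ α : E) : rootCoord μ (-α) = -rootCoord μ α := by
  simp [rootCoord, neg_div]

theorem rootCoord_map (w : E →ₗᵢ[ℝ] E) (μ α : E) : rootCoord (w μ) (w α) = rootCoord μ α := by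
  simp [rootCoord, LinearIsometry.inner_map_map]

/-- The numerator of `d(m, λ)` at `μ = λ + ρ`; the denominator is its value at `ρ`. -/
noncomputable def rootProduct (P : Finset E) (m : E → ℕ) (μ : E) : ℝ :=
  ∏ α ∈ P, ∏ k ∈ range (m α / 2), ((k : ℝ) ^ 2 - rootCoord μ α ^ 2)

theorem rootProduct_map (P : Finset E) (m : E → ℕ) (hdisj : ∀ α ∈ P, -α ∉ P)
    (hmneg : ∀ α, m (-α) = m α) (w : E →ₗᵢ[ℝ] E) (hmaps : ∀ α ∈ P, w α ∈ P ∨ -w α ∈ P)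
    (hwm : ∀ α ∈ P, m (w α) = m α) (μ : E) :
    rootProduct P m (w μ) = rootProduct P m μ := by
  set g : E → ℝ := fun β => ∏ k ∈ range (m β / 2), ((k : ℝ) ^ 2 - rootCoord (w μ) β ^ 2)
  have hg : ∀ β, g (-β) = g β := fun β => by simp only [g, hmneg, rootCoord_neg_right, neg_sq]
  calc rootProduct P m (w μ) = ∏ α ∈ P, g (w α) :=
        (P.prod_comp_eq_prod_of_map_neg hdisj w w.injective (map_neg w) hmaps g hg).symm
    _ = rootProduct P m μ :=
        prod_congr rfl fun α hα => by simp only [g, hwm α hα, rootCoord_map]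

end RootProduct

theorem plancherel_density_weyl_invariant_general
    {E : Type*} [NormedAddCommGroup E] [InnerProductSpace ℝ E]
    (Δ Δpos : Finset E) (m : E → ℕ)
    (hpos : Δpos ⊆ Δ)
    (hsplit : ∀ α ∈ Δ, α ∈ Δpos ∨ -α ∈ Δpos)
    (hdisj : ∀ α ∈ Δpos, -α ∉ Δpos)
    (hmneg : ∀ α, m (-α) = m α)
    (ρ : E)
    (w : E ≃ₗᵢ[ℝ] E) (hw : ∀ α ∈ Δ, w α ∈ Δ) (hwm : ∀ α ∈ Δ, m (w α) = m α)
    (lam : E) :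
    (let d : E → ℝ := fun ν => ∏ α ∈ Δpos, ∏ k ∈ Finset.range (m α / 2),
        ((k : ℝ)^2 - ((inner ℝ (ν + ρ) α : ℝ) / (inner ℝ α α : ℝ))^2) /
          ((k : ℝ)^2 - ((inner ℝ ρ α : ℝ) / (inner ℝ α α : ℝ))^2)
     d (w (lam + ρ) - ρ) = d lam) := by
  intro d
  have hd : ∀ ν, d ν = rootProduct Δpos m (ν + ρ) / rootProduct Δpos m ρ := fun ν => by
    simp only [d, rootProduct, rootCoord, ← prod_div_distrib]
  have hinv := rootProduct_map Δpos m hdisj hmneg w.toLinearIsometry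
    (fun α hα => hsplit _ (hw α (hpos hα))) (fun α hα => hwm α (hpos hα)) (lam + ρ)
  rw [hd, hd, sub_add_cancel]
  exact congrArg (· / rootProduct Δpos m ρ) hinv

/-- The polynomial
`d(m,λ) = Π_{α∈Δ⁺} Π_{k=0}^{m_α/2−1} (k²−(λ+ρ)_α²)/(k²−ρ_α²)` is invariant
under the affine Weyl-group action `λ ↦ w(λ+ρ) − ρ`: for every Weyl group
element `w` (an isometry permuting the roots and preserving `m`),
`d(m, w(λ+ρ)−ρ) = d(m,λ)`. -/
theorem plancherel_density_weyl_invariant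
    {E : Type*} [NormedAddCommGroup E] [InnerProductSpace ℝ E]
    (Δ Δpos : Finset E) (m : E → ℕ)
    (hzero : (0:E) ∉ Δ)
    (hrefl : ∀ α ∈ Δ, ∀ β ∈ Δ,
      β - (2 * ((inner ℝ α β : ℝ) / (inner ℝ α α : ℝ))) • α ∈ Δ)
    (hreduced : ∀ α ∈ Δ, (2:ℝ) • α ∉ Δ)
    (hpos : Δpos ⊆ Δ)
    (hsplit : ∀ α ∈ Δ, α ∈ Δpos ∨ -α ∈ Δpos)
    (hdisj : ∀ α ∈ Δpos, -α ∉ Δpos)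
    (heven : ∀ α, Even (m α))
    (hmneg : ∀ α, m (-α) = m α)
    (ρ : E) (hρ : ρ = (1/2 : ℝ) • ∑ α ∈ Δpos, (m α : ℝ) • α)
    (hρineq : ∀ α ∈ Δpos, (m α : ℝ) / 2 ≤ (inner ℝ ρ α : ℝ) / (inner ℝ α α : ℝ))
    (w : E ≃ₗᵢ[ℝ] E) (hw : ∀ α ∈ Δ, w α ∈ Δ) (hwm : ∀ α ∈ Δ, m (w α) = m α)
    (lam : E) :
    (let d : E → ℝ := fun ν => ∏ α ∈ Δpos, ∏ k ∈ Finset.range (m α / 2),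
        ((k : ℝ)^2 - ((inner ℝ (ν + ρ) α : ℝ) / (inner ℝ α α : ℝ))^2) /
          ((k : ℝ)^2 - ((inner ℝ ρ α : ℝ) / (inner ℝ α α : ℝ))^2)
     d (w (lam + ρ) - ρ) = d lam) :=
  plancherel_density_weyl_invariant_general Δ Δpos m hpos hsplit hdisj hmneg ρ w hw hwm lam
end
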